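/- Let p ≥ 1, let λ₁,…,λ_{p+1} be distinct real numbers, and set a = min_{1≤k≤p+1} λ_k, b = max_{1≤k≤p+1} λ_k. Let f : ℝ → ℂ be (p+1)-times continuously differentiable on an open interval containing [a,b]. Then Σ_{j=1}^{p+1} f(λ_j)/∏_{k≠j}(λ_j − λ_k) = (1/p!) f^{(p)}(a) + (1/p!) ∫_a^b f^{(p+1)}(t) · ( Σ_{j=1}^{p+1} (λ_j − t)_+^p/∏_{k≠j}(λ_j − λ_k) ) dt. -/

import Mathlib

/-!
Expand each `f (l j)` by Taylor's formula at `a` with integral remainder. The divided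
difference of a polynomial of degree `≤ n` on `n + 1` knots is its coefficient of `x ^ n`
(Lagrange interpolation), so it annihilates the Taylor monomials `(x - a) ^ m`, `m < n`, and
leaves `f⁽ⁿ⁾(a) / n!`. Since `a ≤ l j ≤ b`, the remainder `∫_a^{l j} (l j - t)ⁿ f⁽ⁿ⁺¹⁾(t) dt`
equals `∫_a^b (l j - t)₊ⁿ f⁽ⁿ⁺¹⁾(t) dt`, and the divided difference moves under this integral
over a common interval.
-/

open Finset MeasureTheory intervalIntegral Polynomial
open scoped Nat

variable {E : Type*} [NormedAddCommGroup E] [NormedSpace ℝ E] {n : ℕ}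

noncomputable def dividedDiff (l : Fin (n + 1) → ℝ) (f : ℝ → E) : E :=
  ∑ j, (∏ k ∈ univ.erase j, (l j - l k))⁻¹ • f (l j)

noncomputable def truncPow (n : ℕ) (x : ℝ) : ℝ := if 0 ≤ x then x ^ n else 0

section DividedDiff

variable (l : Fin (n + 1) → ℝ)

theorem dividedDiff_congr {f g : ℝ → E} (h : ∀ j, f (l j) = g (l j)) :
    dividedDiff l f = dividedDiff l g := by
  simp only [dividedDiff, h]

theorem dividedDiff_add (f g : ℝ → E) :
    dividedDiff l (fun x => f x + g x) = dividedDiff l f + dividedDiff l g := by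
  simp only [dividedDiff, smul_add, sum_add_distrib]

theorem dividedDiff_const_smul (c : ℝ) (f : ℝ → E) :
    dividedDiff l (fun x => c • f x) = c • dividedDiff l f := by
  simp only [dividedDiff, smul_sum, smul_comm c]

theorem dividedDiff_sum {ι : Type*} (s : Finset ι) (f : ι → ℝ → E) :
    dividedDiff l (fun x => ∑ i ∈ s, f i x) = ∑ i ∈ s, dividedDiff l (f i) := by
  simp only [dividedDiff, smul_sum]
  exact sum_comm

theorem dividedDiff_smul_const (w : ℝ → ℝ) (c : E) :
    dividedDiff l (fun x => w x • c) = dividedDiff l w • c := by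
  simp only [dividedDiff, smul_smul, sum_smul, smul_eq_mul]

theorem dividedDiff_sub_pow (hl : Function.Injective l) (a : ℝ) {m : ℕ} (hm : m ≤ n) :
    dividedDiff l (fun x => (x - a) ^ m) = if m = n then 1 else 0 := by
  have hdeg : ((X - C a) ^ m).degree < (#(univ : Finset (Fin (n + 1))) : WithBot ℕ) := by
    simp only [degree_pow, degree_X_sub_C, Finset.card_univ, Fintype.card_fin, nsmul_one]
    exact_mod_cast Nat.lt_succ_of_le hm
  have hcoeff := Lagrange.coeff_eq_sum hl.injOn hdeg
  simp only [Finset.card_univ, Fintype.card_fin, add_tsub_cancel_right, eval_pow, eval_sub, eval_X,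
    eval_C] at hcoeff
  simp only [dividedDiff, smul_eq_mul, inv_mul_eq_div, ← hcoeff]
  rcases hm.eq_or_lt with rfl | hlt
  · simpa using ((monic_X_sub_C a).pow m).coeff_natDegree
  · rw [coeff_eq_zero_of_natDegree_lt (by simpa using hlt), if_neg hlt.ne]

theorem dividedDiff_taylorWithinEval (hl : Function.Injective l) (f : ℝ → E) (s : Set ℝ)
    (a : ℝ) :
    dividedDiff l (taylorWithinEval f n s a) = (n ! : ℝ)⁻¹ • iteratedDerivWithin n f s a := by
  have htaylor : taylorWithinEval f n s a = fun x => ∑ m ∈ range (n + 1),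
      (x - a) ^ m • ((m ! : ℝ)⁻¹ • iteratedDerivWithin m f s a) := by
    ext x
    simp only [taylor_within_apply, mul_comm, mul_smul]
  rw [htaylor, dividedDiff_sum]
  simp only [dividedDiff_smul_const]
  rw [sum_congr rfl fun m hm => by
    rw [dividedDiff_sub_pow l hl a (mem_range_succ_iff.1 hm)]]
  simp [ite_smul]

theorem dividedDiff_integral (K : ℝ → ℝ → ℝ) (g : ℝ → E) {a b : ℝ}
    (hK : ∀ j, IntervalIntegrable (fun t => K (l j) t • g t) volume a b) :
    dividedDiff l (fun x => ∫ t in a..b, K x t • g t)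
      = ∫ t in a..b, dividedDiff l (fun x => K x t) • g t := by
  have hK' : ∀ j ∈ univ, IntervalIntegrable
      (fun t => (∏ k ∈ univ.erase j, (l j - l k))⁻¹ • K (l j) t • g t) volume a b :=
    fun j _ => (hK j).smul _
  simp only [dividedDiff, ← intervalIntegral.integral_smul, sum_smul, smul_assoc]
  exact (intervalIntegral.integral_finsetSum hK').symm

end DividedDiff

theorem truncPow_sub_smul_eq_indicator (n : ℕ) (x : ℝ) (g : ℝ → E) :
    (fun t => truncPow n (x - t) • g t) = (Set.Iic x).indicator fun t => (x - t) ^ n • g t := by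
  ext t
  by_cases ht : t ≤ x <;> simp [truncPow, ht]

theorem integral_truncPow_sub_smul (n : ℕ) (g : ℝ → E) {a b x : ℝ} (hax : a ≤ x)
    (hxb : x ≤ b) :
    ∫ t in a..b, truncPow n (x - t) • g t = ∫ t in a..x, (x - t) ^ n • g t := by
  rw [truncPow_sub_smul_eq_indicator, integral_of_le (hax.trans hxb),
    setIntegral_indicator measurableSet_Iic, Set.Ioc_inter_Iic, min_eq_right hxb,
    integral_of_le hax]

theorem IntervalIntegrable.truncPow_sub_smul (n : ℕ) (x : ℝ) {g : ℝ → E} {a b : ℝ}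
    (hg : IntervalIntegrable g volume a b) :
    IntervalIntegrable (fun t => truncPow n (x - t) • g t) volume a b := by
  have hpow : IntervalIntegrable (fun t => (x - t) ^ n • g t) volume a b :=
    hg.continuousOn_smul (by fun_prop)
  rw [truncPow_sub_smul_eq_indicator]
  exact intervalIntegrable_iff.2 ((intervalIntegrable_iff.1 hpow).indicator measurableSet_Iic)

theorem taylor_integral_remainder_of_isOpen [CompleteSpace E] {f : ℝ → E} {s : Set ℝ}
    (hs : IsOpen s) (hf : ContDiffOn ℝ (n + 1) f s) {x₀ x : ℝ} (hx : Set.uIcc x₀ x ⊆ s) :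
    f x - taylorWithinEval f n s x₀ x =
      ∫ t in x₀..x, ((x - t) ^ n / n !) • iteratedDerivWithin (n + 1) f s t := by
  have hderiv : ∀ t ∈ Set.uIcc x₀ x, HasDerivAt (fun y => taylorWithinEval f n s y x)
      (((n ! : ℝ)⁻¹ * (x - t) ^ n) • iteratedDerivWithin (n + 1) f s t) t := fun t ht =>
    (hasDerivWithinAt_taylorWithinEval hs.uniqueDiffOn self_mem_nhdsWithin (hx ht) subset_rfl
      (hf.of_le (by exact_mod_cast le_self_add))
      (hf.differentiableOn_iteratedDerivWithin (by exact_mod_cast lt_add_one n)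
        hs.uniqueDiffOn t (hx ht))).hasDerivAt (hs.mem_nhds (hx ht))
  have hcont : ContinuousOn (iteratedDerivWithin (n + 1) f s) (Set.uIcc x₀ x) :=
    (hf.continuousOn_iteratedDerivWithin le_rfl hs.uniqueDiffOn).mono hx
  simp only [div_eq_inv_mul]
  rw [integral_eq_sub_of_hasDerivAt hderiv (ContinuousOn.intervalIntegrable (by fun_prop)),
    taylorWithinEval_self]

theorem dividedDiff_eq_add_integral_truncPow [CompleteSpace E] {l : Fin (n + 1) → ℝ}
    (hl : Function.Injective l) {f : ℝ → E} {s : Set ℝ} (hs : IsOpen s)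
    (hf : ContDiffOn ℝ (n + 1) f s) {a b : ℝ} (hab : Set.Icc a b ⊆ s)
    (hl_mem : ∀ j, l j ∈ Set.Icc a b) :
    dividedDiff l f = (n ! : ℝ)⁻¹ • iteratedDerivWithin n f s a
      + (n ! : ℝ)⁻¹ • ∫ t in a..b,
          dividedDiff l (fun x => truncPow n (x - t)) • iteratedDerivWithin (n + 1) f s t := by
  have hg : IntervalIntegrable (iteratedDerivWithin (n + 1) f s) volume a b :=
    ((hf.continuousOn_iteratedDerivWithin le_rfl hs.uniqueDiffOn).mono
      ((Set.uIcc_of_le ((hl_mem 0).1.trans (hl_mem 0).2)).trans_subset hab)).intervalIntegrable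
  have hexpand : ∀ j, f (l j) = taylorWithinEval f n s a (l j)
      + (n ! : ℝ)⁻¹ • ∫ t in a..b, truncPow n (l j - t) • iteratedDerivWithin (n + 1) f s t := by
    intro j
    obtain ⟨haj, hjb⟩ := hl_mem j
    rw [integral_truncPow_sub_smul n _ haj hjb, ← intervalIntegral.integral_smul,
      ← sub_eq_iff_eq_add',
      taylor_integral_remainder_of_isOpen hs hf ((Set.uIcc_of_le haj).trans_subset
        ((Set.Icc_subset_Icc_right hjb).trans hab))]
    simp only [smul_smul, div_eq_inv_mul]
  rw [dividedDiff_congr l (g := fun x => taylorWithinEval f n s a x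
      + (n ! : ℝ)⁻¹ • ∫ t in a..b, truncPow n (x - t) • iteratedDerivWithin (n + 1) f s t)
      hexpand, dividedDiff_add, dividedDiff_const_smul, dividedDiff_taylorWithinEval l hl,
    dividedDiff_integral l (fun x t => truncPow n (x - t)) _ fun j => hg.truncPow_sub_smul n _]

theorem stmt7_general (p : ℕ) (l : Fin (p + 1) → ℝ) (hl : Function.Injective l)
    (a b : ℝ) (ha : a = univ.inf' univ_nonempty l) (hb : b = univ.sup' univ_nonempty l)
    (u v : ℝ) (hu : u < a) (hv : b < v)
    (f : ℝ → ℂ) (hf : ContDiffOn ℝ (p + 1) f (Set.Ioo u v)) :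
    ∑ j : Fin (p + 1), f (l j) / ((∏ k ∈ univ.erase j, (l j - l k) : ℝ) : ℂ)
      = (p.factorial : ℂ)⁻¹ * iteratedDerivWithin p f (Set.Ioo u v) a
        + (p.factorial : ℂ)⁻¹ *
          ∫ t in a..b,
            iteratedDerivWithin (p + 1) f (Set.Ioo u v) t *
              ((∑ j : Fin (p + 1),
                  (if 0 ≤ l j - t then (l j - t) ^ p else 0) /
                    ∏ k ∈ univ.erase j, (l j - l k) : ℝ) : ℂ) := by
  have hl_mem : ∀ j, l j ∈ Set.Icc a b := fun j =>
    ⟨ha ▸ inf'_le l (mem_univ j), hb ▸ le_sup' l (mem_univ j)⟩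
  have key := dividedDiff_eq_add_integral_truncPow hl isOpen_Ioo hf (Set.Icc_subset_Ioo hu hv)
    hl_mem
  simp only [dividedDiff, truncPow, Complex.real_smul, smul_eq_mul, inv_mul_eq_div,
    Complex.ofReal_inv, Complex.ofReal_natCast, Complex.ofReal_sum] at key
  rw [key, inv_mul_eq_div, inv_mul_eq_div]
  simp only [Complex.ofReal_sum, mul_comm]

/-- Representation of the divided difference via an antiderivative of the basic spline:
for distinct knots with `a = min λ_k`, `b = max λ_k` and `f` of class `C^{p+1}` on an open
interval `(u, v) ⊇ [a, b]`,
`Δ^{(p)}(f) = (1/p!) f^{(p)}(a) + (1/p!) ∫_a^b f^{(p+1)}(t) ∑ j (λ_j - t)_+^p/∏_{k≠j}(λ_j-λ_k) dt`. -/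
theorem stmt7 (p : ℕ) (hp : 1 ≤ p) (l : Fin (p + 1) → ℝ) (hl : Function.Injective l)
    (a b : ℝ) (ha : a = univ.inf' univ_nonempty l) (hb : b = univ.sup' univ_nonempty l)
    (u v : ℝ) (hu : u < a) (hv : b < v)
    (f : ℝ → ℂ) (hf : ContDiffOn ℝ (p + 1) f (Set.Ioo u v)) :
    ∑ j : Fin (p + 1), f (l j) / ((∏ k ∈ univ.erase j, (l j - l k) : ℝ) : ℂ)
      = (p.factorial : ℂ)⁻¹ * iteratedDerivWithin p f (Set.Ioo u v) a
        + (p.factorial : ℂ)⁻¹ *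
          ∫ t in a..b,
            iteratedDerivWithin (p + 1) f (Set.Ioo u v) t *
              ((∑ j : Fin (p + 1),
                  (if 0 ≤ l j - t then (l j - t) ^ p else 0) /
                    ∏ k ∈ univ.erase j, (l j - l k) : ℝ) : ℂ) :=
  stmt7_general p l hl a b ha hb u v hu hv f hf
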